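/- arXiv:1406.2514 — 5 statements merged into one kernel-verified Lean document; each statement's English description precedes it below -/
import Mathlib

section
/- Let G be a generator of an abelian category A (i.e., Hom(G,-) is faithful) and let X be a chain complex in A. If the complex of abelian groups Hom(G, X) is exact, then X itself is exact. -/
open CategoryTheory CategoryTheory.Limits Opposite

/-- If `G` is a generator of an abelian category `A` (i.e. `Hom(G,-)` is
faithful) and `X` is a chain complex over `A` such that the complex of abelian groups
`Hom(G, X)` is exact, then `X` itself is exact. -/
theorem stmt_0 {A : Type*} [Category A] [Abelian A] (G : A)
    (hG : (preadditiveCoyoneda.obj (op G)).Faithful)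
    (X : HomologicalComplex A (ComplexShape.down ℤ))
    (h : ∀ n, ((((preadditiveCoyoneda.obj (op G)).mapHomologicalComplex
      (ComplexShape.down ℤ)).obj X).ExactAt n)) :
    ∀ n, X.ExactAt n := by
  intro n
  have hmap := h n
  rw [HomologicalComplex.exactAt_iff, ShortComplex.ab_exact_iff] at hmap
  rw [HomologicalComplex.exactAt_iff, ShortComplex.exact_iff_epi_toCycles]
  set S := X.sc n with hS
  rw [Preadditive.epi_iff_cancel_zero]
  intro T u hu
  apply (preadditiveCoyoneda.obj (op G)).map_injective
  ext (f : G ⟶ S.cycles)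
  -- f ≫ iCycles is a cycle
  have hf : (f ≫ S.iCycles) ≫ S.g = 0 := by
    rw [Category.assoc, S.iCycles_g, comp_zero]
  obtain ⟨x₀, hx₁⟩ := hmap (x₂ := f ≫ S.iCycles) hf
  obtain ⟨x₁, rfl⟩ : ∃ x₁ : G ⟶ S.X₁, x₁ = x₀ := ⟨x₀, rfl⟩
  have hfe : f = x₁ ≫ S.toCycles := by
    rw [← cancel_mono S.iCycles, Category.assoc, S.toCycles_i]
    exact hx₁.symm
  show f ≫ u = f ≫ (0 : S.cycles ⟶ T)
  rw [hfe, Category.assoc, hu, comp_zero, comp_zero]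
end

section
/- Let G be a generator of a Grothendieck category 𝒢 and let 0 → A → B → C → 0 be a G-exact sequence. Then the pushout of the monomorphism A → B along any morphism A → X yields a G-exact sequence 0 → X → P → C → 0. -/
open CategoryTheory CategoryTheory.Limits Opposite

/-- A short exact sequence in `𝒢` is `G`-exact if it remains a short exact sequence
after applying `Hom(G,-)`. -/
def IsGExact {𝒢 : Type*} [Category 𝒢] [Abelian 𝒢] (G : 𝒢) (S : ShortComplex 𝒢) : Prop :=
  S.ShortExact ∧ (S.map (preadditiveCoyoneda.obj (op G))).ShortExact

/-- In a Grothendieck category `𝒢` with generator `G`, the pushout of a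
`G`-monomorphism along any morphism yields a `G`-exact sequence: if `0 → A → B → C → 0` is
`G`-exact and `A → X` is any morphism, then the induced sequence `0 → X → P → C → 0`
obtained from the pushout `P` of `A → B` along `A → X` is `G`-exact. -/
theorem stmt_2 {𝒢 : Type*} [Category 𝒢] [Abelian 𝒢] [HasColimits 𝒢] [AB5 𝒢]
    (G : 𝒢) (hG : IsSeparator G)
    (S : ShortComplex 𝒢) (hS : IsGExact G S)
    {X : 𝒢} (h : S.X₁ ⟶ X) :
    IsGExact G (ShortComplex.mk
      (pushout.inr S.f h : X ⟶ pushout S.f h)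
      (pushout.desc S.g (0 : X ⟶ S.X₃) (by simp))
      (pushout.inr_desc _ _ _)) := by
  obtain ⟨hS1, hS2⟩ := hS
  have hf : Mono S.f := hS1.mono_f
  have hg : Epi S.g := hS1.epi_g
  set T : ShortComplex 𝒢 := ShortComplex.mk
      (pushout.inr S.f h : X ⟶ pushout S.f h)
      (pushout.desc S.g (0 : X ⟶ S.X₃) (by simp))
      (pushout.inr_desc _ _ _) with hT
  -- the canonical epi from the biproduct
  let q : S.X₂ ⊞ X ⟶ pushout S.f h := biprod.desc (pushout.inl S.f h) (pushout.inr S.f h)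
  have hq : Epi q := by
    constructor
    intro Z u v huv
    apply pushout.hom_ext
    · simpa [q] using biprod.inl ≫= huv
    · simpa [q] using biprod.inr ≫= huv
  have Texact : T.Exact := by
    rw [ShortComplex.exact_iff_exact_up_to_refinements]
    intro A x₂ hx₂
    obtain ⟨A', π, hπ, y, hy⟩ := surjective_up_to_refinements_of_epi q x₂
    have hyB : (y ≫ biprod.fst) ≫ S.g = 0 := by
      have : π ≫ x₂ ≫ T.g = y ≫ q ≫ T.g := by rw [← Category.assoc, hy, Category.assoc]
      rw [hx₂, comp_zero] at this
      have hqg : q ≫ T.g = biprod.desc S.g 0 := by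
        apply biprod.hom_ext' <;> simp [q, T]
        · exact pushout.inl_desc _ _ _
        · exact pushout.inr_desc _ _ _
      rw [hqg] at this
      have hy2 : y ≫ biprod.desc S.g 0 = (y ≫ biprod.fst) ≫ S.g := by
        conv_lhs => rw [show y = biprod.lift (y ≫ biprod.fst) (y ≫ biprod.snd) by
          apply biprod.hom_ext <;> simp]
        simp
      rw [hy2] at this
      exact this.symm
    obtain ⟨A'', π', hπ', a, ha⟩ := hS1.exact.exact_up_to_refinements (y ≫ biprod.fst) hyB
    refine ⟨A'', π' ≫ π, epi_comp _ _, π' ≫ y ≫ biprod.snd + a ≫ h, ?_⟩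
    have hy' : π' ≫ y = biprod.lift (a ≫ S.f) (π' ≫ y ≫ biprod.snd) := by
      apply biprod.hom_ext
      · simpa using ha
      · simp
    calc (π' ≫ π) ≫ x₂ = (π' ≫ y) ≫ q := by
          rw [Category.assoc, hy, ← Category.assoc]
      _ = (biprod.lift (a ≫ S.f) (π' ≫ y ≫ biprod.snd)) ≫ q := by rw [hy']
      _ = a ≫ S.f ≫ pushout.inl S.f h + (π' ≫ y ≫ biprod.snd) ≫ pushout.inr S.f h := by
          simp [q]
      _ = (π' ≫ y ≫ biprod.snd + a ≫ h) ≫ T.f := by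
          rw [pushout.condition]; simp [T, add_comm]
  have monoTf : Mono T.f := by
    dsimp [T]; infer_instance
  have epiTg : Epi T.g := by
    have : pushout.inl S.f h ≫ T.g = S.g := by simp only [T]; exact pushout.inl_desc _ _ _
    exact epi_of_epi_fac this
  have TSE : T.ShortExact := ⟨Texact⟩
  refine ⟨TSE, ?_⟩
  -- mapped complex
  let F := preadditiveCoyoneda.obj (op G)
  have monoF : Mono ((T.map F).f) := by
    rw [AddCommGrpCat.mono_iff_injective]
    intro u v huv
    have : (u : G ⟶ X) ≫ T.f = (v : G ⟶ X) ≫ T.f := huv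
    exact (cancel_mono T.f).1 this
  have epiF : Epi ((T.map F).g) := by
    rw [AddCommGrpCat.epi_iff_surjective]
    intro u
    have hsurj := (AddCommGrpCat.epi_iff_surjective _).1 hS2.epi_g
    obtain ⟨v, hv⟩ := hsurj u
    refine ⟨(v : G ⟶ S.X₂) ≫ pushout.inl S.f h, ?_⟩
    show ((v : G ⟶ S.X₂) ≫ pushout.inl S.f h) ≫ T.g = u
    have : (v : G ⟶ S.X₂) ≫ S.g = u := hv
    exact (Category.assoc (v : G ⟶ S.X₂) _ _).trans ((congrArg (fun k => (v : G ⟶ S.X₂) ≫ k) (pushout.inl_desc S.g (0 : X ⟶ S.X₃) (by simp))).trans this)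
  have exactF : (T.map F).Exact := by
    rw [ShortComplex.ab_exact_iff]
    intro x₂ hx₂
    have hx₂' : (x₂ : G ⟶ pushout S.f h) ≫ T.g = 0 := hx₂
    obtain ⟨l, hl⟩ := Texact.lift' x₂ hx₂'
    exact ⟨l, hl⟩
  haveI := monoF
  haveI := epiF
  exact ⟨exactF⟩
end

section
/- Let G be a generator of a Grothendieck category 𝒢 and let A ⊆ B ⊆ C be subobjects. If A is a G-subobject of C and B/A is a G-subobject of C/A, then B is a G-subobject of C. -/
open CategoryTheory CategoryTheory.Limits Opposite

/-- A monomorphism `m : P ⟶ X` exhibits `P` as a `G`-subobject of `X` if the induced map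
`Hom(G,X) → Hom(G,X/P)` is surjective. -/
def IsGSubobject {𝒢 : Type*} [Category 𝒢] [Abelian 𝒢] (G : 𝒢) {P X : 𝒢} (m : P ⟶ X) : Prop :=
  Mono m ∧ Function.Surjective (fun (φ : G ⟶ X) => φ ≫ cokernel.π m)

/-- Let `G` be a generator of a Grothendieck category `𝒢` and
`A ⊆ B ⊆ C` subobjects (monomorphisms `i : A ⟶ B`, `j : B ⟶ C`).  If `A` is a
`G`-subobject of `C` and `B/A` is a `G`-subobject of `C/A` (via the canonical map
`cokernel i ⟶ cokernel (i ≫ j)`), then `B` is a `G`-subobject of `C`. -/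
theorem stmt_7 {𝒢 : Type*} [Category 𝒢] [Abelian 𝒢] [HasColimits 𝒢] [AB5 𝒢]
    (G : 𝒢) (hG : IsSeparator G)
    {A B C : 𝒢} (i : A ⟶ B) (j : B ⟶ C) [Mono i] [Mono j]
    (h₁ : IsGSubobject G (i ≫ j))
    (h₂ : IsGSubobject G
      (cokernel.map i (i ≫ j) (𝟙 A) j (by simp) : cokernel i ⟶ cokernel (i ≫ j))) :
    IsGSubobject G j := by
  obtain ⟨m₁, s₁⟩ := h₁
  obtain ⟨m₂, s₂⟩ := h₂
  refine ⟨inferInstance, ?_⟩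
  set f : cokernel i ⟶ cokernel (i ≫ j) := cokernel.map i (i ≫ j) (𝟙 A) j (by simp) with hfdef
  have hf : cokernel.π i ≫ f = j ≫ cokernel.π (i ≫ j) := by simp [hfdef]
  have he0 : j ≫ cokernel.π (i ≫ j) ≫ cokernel.π f = 0 := by
    rw [← Category.assoc, ← hf, Category.assoc, cokernel.condition, comp_zero]
  let e : cokernel j ⟶ cokernel f := cokernel.desc j (cokernel.π (i ≫ j) ≫ cokernel.π f) he0
  have hd0 : (i ≫ j) ≫ cokernel.π j = 0 := by
    rw [Category.assoc, cokernel.condition, comp_zero]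
  let d : cokernel (i ≫ j) ⟶ cokernel j := cokernel.desc (i ≫ j) (cokernel.π j) hd0
  have hfd : f ≫ d = 0 := by
    rw [← cancel_epi (cokernel.π i), ← Category.assoc, hf, Category.assoc, comp_zero]
    simp [d]
  let e' : cokernel f ⟶ cokernel j := cokernel.desc f d hfd
  have hee' : e ≫ e' = 𝟙 (cokernel j) := by
    apply coequalizer.hom_ext
    simp [e, e', d]
  have hmono : Mono e := ⟨fun g h hgh => by
    have := hgh =≫ e'
    simpa [Category.assoc, hee'] using this⟩
  intro ψ
  obtain ⟨α, hα⟩ := s₂ (ψ ≫ e)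
  obtain ⟨β, hβ⟩ := s₁ α
  simp only at hα hβ
  refine ⟨β, ?_⟩
  have key : (β ≫ cokernel.π j) ≫ e = ψ ≫ e := by
    have h1 : cokernel.π j ≫ e = cokernel.π (i ≫ j) ≫ cokernel.π f := by
      simp [e]
    rw [Category.assoc, h1, ← Category.assoc, hβ, hα]
  exact (cancel_mono e).mp key
end

section
/- Let G be a generator of a Grothendieck category 𝒢 and let A ⊆ B ⊆ C be subobjects. If A is a G-subobject of B and B is a G-subobject of C, then A is a G-subobject of C. -/
open CategoryTheory CategoryTheory.Limits Opposite

section Aux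

open CategoryTheory.Abelian

attribute [local instance] Pseudoelement.objectToSort Pseudoelement.homToFun

/-- The induced map `cokernel i ⟶ cokernel (i ≫ j)` is a monomorphism when `j` is. -/
lemma mono_cokernel_desc_comp {𝒢 : Type*} [Category 𝒢] [Abelian 𝒢]
    {A B C : 𝒢} (i : A ⟶ B) (j : B ⟶ C) [Mono j] :
    Mono (cokernel.desc i (j ≫ cokernel.π (i ≫ j)) (by rw [← Category.assoc]; exact cokernel.condition _)) := by
  apply Pseudoelement.mono_of_zero_of_map_zero
  intro x hx
  obtain ⟨b, hb⟩ := Pseudoelement.pseudo_surjective_of_epi (cokernel.π i) x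
  have h1 : (cokernel.π (i ≫ j)) (j b) = 0 := by
    rw [← Pseudoelement.comp_apply]
    have : j ≫ cokernel.π (i ≫ j) =
        cokernel.π i ≫ cokernel.desc i (j ≫ cokernel.π (i ≫ j)) (by rw [← Category.assoc]; exact cokernel.condition _) := by
      rw [cokernel.π_desc]
    rw [this, Pseudoelement.comp_apply, hb, hx]
  obtain ⟨a, ha⟩ := Pseudoelement.pseudo_exact_of_exact (CategoryTheory.ShortComplex.exact_cokernel (i ≫ j)) _ h1
  have ha' : j (i a) = j b := by
    rw [← ha, ← Pseudoelement.comp_apply]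
  have hab : i a = b := Pseudoelement.pseudo_injective_of_mono j ha'
  rw [← hb, ← hab, ← Pseudoelement.comp_apply, cokernel.condition,
    Pseudoelement.zero_apply]

end Aux

/-- Let `G` be a generator of a Grothendieck category `𝒢` and
`A ⊆ B ⊆ C` subobjects (monomorphisms `i : A ⟶ B`, `j : B ⟶ C`).  If `A` is a
`G`-subobject of `B` and `B` is a `G`-subobject of `C`, then `A` is a `G`-subobject
of `C`. -/
theorem stmt_8 {𝒢 : Type*} [Category 𝒢] [Abelian 𝒢] [HasColimits 𝒢] [AB5 𝒢]
    (G : 𝒢) (hG : IsSeparator G)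
    {A B C : 𝒢} (i : A ⟶ B) (j : B ⟶ C) [Mono i] [Mono j]
    (h₁ : IsGSubobject G i) (h₂ : IsGSubobject G j) :
    IsGSubobject G (i ≫ j) := by
  obtain ⟨hmi, hs₁⟩ := h₁
  obtain ⟨hmj, hs₂⟩ := h₂
  refine ⟨mono_comp i j, ?_⟩
  intro ψ
  -- the comparison maps between the cokernels
  let v : cokernel i ⟶ cokernel (i ≫ j) :=
    cokernel.desc i (j ≫ cokernel.π (i ≫ j)) (by rw [← Category.assoc]; exact cokernel.condition _)
  let u : cokernel (i ≫ j) ⟶ cokernel j :=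
    cokernel.desc (i ≫ j) (cokernel.π j) (by rw [Category.assoc, cokernel.condition, comp_zero])
  have hπv : cokernel.π i ≫ v = j ≫ cokernel.π (i ≫ j) := cokernel.π_desc _ _ _
  have hπu : cokernel.π (i ≫ j) ≫ u = cokernel.π j := cokernel.π_desc _ _ _
  have hvu : v ≫ u = 0 := by
    rw [← cancel_epi (cokernel.π i)]
    rw [← Category.assoc, hπv, Category.assoc, hπu, cokernel.condition, comp_zero]
  have hv : Mono v := mono_cokernel_desc_comp i j
  -- `u` is a cokernel of `v`
  have hu : IsColimit (CokernelCofork.ofπ u hvu) := by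
    refine CokernelCofork.IsColimit.ofπ _ _
      (fun {T} w hw => cokernel.desc j (cokernel.π (i ≫ j) ≫ w) ?_)
      (fun {T} w hw => ?_) (fun {T} w hw t ht => ?_)
    · rw [← Category.assoc, ← hπv, Category.assoc, hw, comp_zero]
    · rw [← cancel_epi (cokernel.π (i ≫ j)), ← Category.assoc, hπu, cokernel.π_desc]
    · have hue : Epi u := by
        constructor
        intro Z g h hgh
        rw [← cancel_epi (cokernel.π j), ← hπu, Category.assoc, Category.assoc, hgh]
      rw [← cancel_epi u, ht,
        ← cancel_epi (cokernel.π (i ≫ j)), ← Category.assoc, hπu, cokernel.π_desc]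
  -- hence `v` is a kernel of `u`
  have hvk : IsLimit (KernelFork.ofι v hvu) := Abelian.monoIsKernelOfCokernel _ hu
  -- now chase
  obtain ⟨φ₀, hφ₀⟩ := hs₂ (ψ ≫ u)
  simp only at hφ₀
  have hδ : (ψ - φ₀ ≫ cokernel.π (i ≫ j)) ≫ u = 0 := by
    rw [Preadditive.sub_comp, Category.assoc, hπu, hφ₀, sub_self]
  obtain ⟨γ, hγ⟩ := KernelFork.IsLimit.lift' hvk _ hδ
  simp only [KernelFork.ι_ofι] at hγ
  obtain ⟨β, hβ⟩ := hs₁ γ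
  simp only at hβ
  refine ⟨φ₀ + β ≫ j, ?_⟩
  simp only
  rw [Preadditive.add_comp, Category.assoc, ← hπv, ← Category.assoc, hβ, hγ]
  abel
end

section
/- Let 𝒢 be a locally λ-presentable Grothendieck category. A short exact sequence E : 0 → A → B → C → 0 is λ-pure (i.e., Hom(L, E) is short exact for every λ-presented object L) if and only if E is a λ-directed colimit of split short exact sequences. -/
open CategoryTheory CategoryTheory.Limits Opposite

universe v u

variable {𝒢 : Type u} [Category.{v} 𝒢] [Abelian 𝒢] [HasColimits 𝒢]

/-- A preorder `J` is `κ`-directed if every subset of cardinality `< κ` has an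
upper bound. -/
def KDirected (κ : Cardinal.{v}) (J : Type v) [Preorder J] : Prop :=
  ∀ s : Set J, Cardinal.mk s < κ → ∃ u, ∀ j ∈ s, j ≤ u

/-- An object `L` is `κ`-presented if `Hom(L,-)` preserves `κ`-directed colimits. -/
def IsKPresented (κ : Cardinal.{v}) (L : 𝒢) : Prop :=
  ∀ (J : Type v) (_ : Preorder J), KDirected κ J →
    Nonempty (PreservesColimitsOfShape J (preadditiveCoyoneda.obj (op L)))

namespace Stmt15Aux

attribute [local simp] pullback.lift_fst pullback.lift_snd pullback.lift_fst_assoc pullback.lift_snd_assoc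

lemma KDirected.nonempty {κ : Cardinal.{v}} (hκ : κ.IsRegular) {J : Type v} [Preorder J]
    (hJ : KDirected κ J) : Nonempty J := by
  obtain ⟨u, -⟩ := hJ ∅ (by
    simpa using lt_of_lt_of_le Cardinal.aleph0_pos hκ.aleph0_le)
  exact ⟨u⟩

lemma KDirected.isDirected {κ : Cardinal.{v}} (hκ : κ.IsRegular) {J : Type v} [Preorder J]
    (hJ : KDirected κ J) : IsDirected J (· ≤ ·) := by
  constructor
  intro a b
  obtain ⟨u, hu⟩ := hJ {a, b} (lt_of_lt_of_le
    (Cardinal.lt_aleph0_iff_set_finite.2 (Set.toFinite _)) hκ.aleph0_le)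
  exact ⟨u, hu a (by simp), hu b (by simp)⟩

section ColimitSES

universe w u₂

variable {D : Type u₂} [Category.{w} D] [Abelian D]
variable {J : Type w} [Category.{w} J]

/-- A colimit of a diagram of short exact complexes is short exact, provided `colim`
is exact. -/
lemma colimitShortExact [HasColimitsOfShape J D]
    [PreservesFiniteLimits (colim : (J ⥤ D) ⥤ D)]
    (F : J ⥤ ShortComplex D) (hF : ∀ j, (F.obj j).ShortExact)
    (c : Cocone F) (hc : IsColimit c) : c.pt.ShortExact := by
  let T : ShortComplex (J ⥤ D) := (ShortComplex.FunctorEquivalence.inverse J D).obj F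
  haveI : ∀ j, Mono (T.f.app j) := fun j => (hF j).mono_f
  haveI : ∀ j, Epi (T.g.app j) := fun j => (hF j).epi_g
  haveI hm : Mono T.f := NatTrans.mono_of_mono_app _
  haveI he : Epi T.g := NatTrans.epi_of_epi_app _
  haveI : ∀ j, PreservesFiniteLimits ((evaluation J D).obj j) :=
    fun j => ⟨fun _ _ _ => inferInstance⟩
  haveI : ∀ j, PreservesFiniteColimits ((evaluation J D).obj j) :=
    fun j => ⟨fun _ _ _ => inferInstance⟩
  have hT : T.ShortExact := by
    refine ⟨?_⟩
    rw [ShortComplex.exact_iff_isZero_homology]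
    apply Functor.isZero
    intro j
    have e : F.obj j ≅ T.map ((evaluation J D).obj j) :=
      ShortComplex.isoMk (Iso.refl _) (Iso.refl _) (Iso.refl _) (by exact (Category.id_comp _).trans (Category.comp_id _).symm) (by exact (Category.id_comp _).trans (Category.comp_id _).symm)
    have hj : (T.map ((evaluation J D).obj j)).Exact :=
      (ShortComplex.exact_iff_of_iso e).1 (hF j).exact
    rw [ShortComplex.exact_iff_isZero_homology] at hj
    exact IsZero.of_iso hj (T.mapHomologyIso ((evaluation J D).obj j)).symm
  haveI : PreservesFiniteColimits (colim : (J ⥤ D) ⥤ D) :=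
    letI : PreservesColimitsOfSize.{w, w} (colim : (J ⥤ D) ⥤ D) :=
      colimConstAdj.leftAdjoint_preservesColimits
    inferInstance
  have hmap : (T.map colim).ShortExact := hT.map_of_exact colim
  let e₁ : (T.map colim).X₁ ≅ c.pt.X₁ :=
    IsColimit.coconePointUniqueUpToIso (colimit.isColimit (F ⋙ ShortComplex.π₁))
      (isColimitOfPreserves ShortComplex.π₁ hc)
  let e₂ : (T.map colim).X₂ ≅ c.pt.X₂ :=
    IsColimit.coconePointUniqueUpToIso (colimit.isColimit (F ⋙ ShortComplex.π₂))
      (isColimitOfPreserves ShortComplex.π₂ hc)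
  let e₃ : (T.map colim).X₃ ≅ c.pt.X₃ :=
    IsColimit.coconePointUniqueUpToIso (colimit.isColimit (F ⋙ ShortComplex.π₃))
      (isColimitOfPreserves ShortComplex.π₃ hc)
  refine (ShortComplex.shortExact_iff_of_iso
    (ShortComplex.isoMk e₁ e₂ e₃ ?_ ?_)).1 hmap
  · apply colimit.hom_ext
    intro j
    have h1 := IsColimit.comp_coconePointUniqueUpToIso_hom
      (colimit.isColimit (F ⋙ ShortComplex.π₁)) (isColimitOfPreserves ShortComplex.π₁ hc) j
    have h2 := IsColimit.comp_coconePointUniqueUpToIso_hom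
      (colimit.isColimit (F ⋙ ShortComplex.π₂)) (isColimitOfPreserves ShortComplex.π₂ hc) j
    dsimp [e₁, e₂, T] at h1 h2 ⊢
    simp only [ShortComplex.map_f, colim_map]
    erw [ι_colimMap_assoc, h2, reassoc_of% h1]
    exact (c.ι.app j).comm₁₂
  · apply colimit.hom_ext
    intro j
    have h2 := IsColimit.comp_coconePointUniqueUpToIso_hom
      (colimit.isColimit (F ⋙ ShortComplex.π₂)) (isColimitOfPreserves ShortComplex.π₂ hc) j
    have h3 := IsColimit.comp_coconePointUniqueUpToIso_hom
      (colimit.isColimit (F ⋙ ShortComplex.π₃)) (isColimitOfPreserves ShortComplex.π₃ hc) j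
    dsimp [e₂, e₃, T] at h2 h3 ⊢
    simp only [ShortComplex.map_g, colim_map]
    erw [ι_colimMap_assoc, h3, reassoc_of% h2]
    exact (c.ι.app j).comm₂₃

end ColimitSES

section Forward

variable {J : Type v} [Preorder J]
  (S : ShortComplex 𝒢)
  {F : J ⥤ 𝒢} (c : Cocone F) (e : c.pt ≅ S.X₃)

/-- The diagram of pulled-back short complexes. -/
@[reducible]
noncomputable def pbDiagram : J ⥤ ShortComplex 𝒢 where
  obj j := ShortComplex.mk
    (pullback.lift S.f (0 : S.X₁ ⟶ F.obj j)
      (by simp [S.zero]) : S.X₁ ⟶ pullback S.g (c.ι.app j ≫ e.hom))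
    (pullback.snd _ _) (by simp)
  map {j j'} h := ShortComplex.Hom.mk (𝟙 _)
    (pullback.map _ _ _ _ (𝟙 _) (F.map h) (𝟙 _) (by simp)
      (by rw [Category.comp_id, ← c.w h, Category.assoc]))
    (F.map h)
    (by apply pullback.hom_ext <;> simp)
    (by simp)
  map_id j := by ext <;> dsimp <;> simp
  map_comp {j j' j''} h h' := by ext <;> dsimp <;> simp

/-- The canonical cocone on `pbDiagram` with point `S`. -/
noncomputable def pbCocone : Cocone (pbDiagram S c e) where
  pt := S
  ι :=
    { app := fun j => ShortComplex.Hom.mk (𝟙 _) (pullback.fst _ _) (c.ι.app j ≫ e.hom)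
        (by simp [pbDiagram]) (by simpa [pbDiagram] using pullback.condition)
      naturality := fun j j' h => by
        ext
        · simp [pbDiagram]
        · simp [pbDiagram]
        · dsimp [pbDiagram]; rw [← c.w h]; simp }

/-- Each pulled-back short complex is split. -/
noncomputable def pbSplitting (hS : S.ShortExact)
    (s : ∀ j, F.obj j ⟶ S.X₂) (hs : ∀ j, s j ≫ S.g = c.ι.app j ≫ e.hom) (j : J) :
    ((pbDiagram S c e).obj j).Splitting := by
  have hmono := hS.mono_f
  let t : F.obj j ⟶ pullback S.g (c.ι.app j ≫ e.hom) :=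
    pullback.lift (s j) (𝟙 _) (by rw [hs j, Category.id_comp])
  have h1 : ((𝟙 (pullback S.g (c.ι.app j ≫ e.hom)) - pullback.snd _ _ ≫ t) ≫
      pullback.fst _ _) ≫ S.g = 0 := by
    simp [t, Preadditive.sub_comp, pullback.condition, hs j]
  obtain ⟨r, hr⟩ := KernelFork.IsLimit.lift' hS.fIsKernel _ h1
  dsimp at hr
  exact
    { r := r
      s := t
      f_r := by
        dsimp [pbDiagram]
        rw [← cancel_mono S.f, Category.assoc, hr]
        simp [t, Preadditive.sub_comp, Preadditive.comp_sub]
      s_g := by dsimp [pbDiagram]; simp [t]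
      id := by
        dsimp [pbDiagram]
        apply pullback.hom_ext
        · rw [Preadditive.add_comp, Category.assoc, Category.assoc,
            pullback.lift_fst, hr, Preadditive.sub_comp, Category.assoc]
          simp [t]
        · rw [Preadditive.add_comp, Category.assoc, Category.assoc,
            pullback.lift_snd, pullback.lift_snd]
          simp }

end Forward

end Stmt15Aux

/-- Let `𝒢` be a locally `λ`-presentable Grothendieck category.  A short
exact sequence `E : 0 → A → B → C → 0` is `λ`-pure (i.e. `Hom(L, E)` is short exact for
every `λ`-presented `L`) if and only if `E` is a `λ`-directed colimit of split short exact
sequences. -/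
theorem stmt_15 [AB5 𝒢] (κ : Cardinal.{v}) (hκ : κ.IsRegular)
    (hloc : ∀ Z : 𝒢, ∃ (J : Type v) (_ : Preorder J), KDirected κ J ∧
      ∃ (F : J ⥤ 𝒢) (c : Cocone F), Nonempty (IsColimit c) ∧
        (∀ j, IsKPresented κ (F.obj j)) ∧ Nonempty (c.pt ≅ Z))
    (S : ShortComplex 𝒢) (hS : S.ShortExact) :
    (∀ L : 𝒢, IsKPresented κ L →
        (S.map (preadditiveCoyoneda.obj (op L))).ShortExact) ↔
    (∃ (J : Type v) (_ : Preorder J), KDirected κ J ∧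
      ∃ (F : J ⥤ ShortComplex 𝒢) (c : Cocone F), Nonempty (IsColimit c) ∧
        (∀ j, Nonempty ((F.obj j).Splitting)) ∧ Nonempty (c.pt ≅ S)) := by
  constructor
  · intro h
    obtain ⟨J, pJ, hJ, F, c, ⟨hc⟩, hpres, ⟨e⟩⟩ := hloc S.X₃
    haveI : IsDirected J (· ≤ ·) := Stmt15Aux.KDirected.isDirected hκ hJ
    haveI : Nonempty J := Stmt15Aux.KDirected.nonempty hκ hJ
    have hsurj : ∀ j, ∃ sj : F.obj j ⟶ S.X₂, sj ≫ S.g = c.ι.app j ≫ e.hom := by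
      intro j
      have hse := h (F.obj j) (hpres j)
      have hepi : Epi ((S.map (preadditiveCoyoneda.obj (op (F.obj j)))).g) := hse.epi_g
      rw [AddCommGrpCat.epi_iff_surjective] at hepi
      obtain ⟨sj, hsj⟩ := hepi (c.ι.app j ≫ e.hom)
      exact ⟨sj, hsj⟩
    choose s hs using hsurj
    set G := Stmt15Aux.pbDiagram S c e with hG
    refine ⟨J, pJ, hJ, G, colimit.cocone G, ⟨colimit.isColimit G⟩,
      fun j => ⟨Stmt15Aux.pbSplitting S c e hS s hs j⟩, ⟨?_⟩⟩
    -- the comparison morphism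
    let φ : colimit G ⟶ S := colimit.desc G (Stmt15Aux.pbCocone S c e)
    have hι : ∀ j, colimit.ι G j ≫ φ = (Stmt15Aux.pbCocone S c e).ι.app j :=
      fun j => colimit.ι_desc _ j
    have hτ₁fac : ∀ j, (colimit.ι G j).τ₁ ≫ φ.τ₁ = 𝟙 S.X₁ := by
      intro j
      have := congrArg ShortComplex.Hom.τ₁ (hι j)
      rw [ShortComplex.comp_τ₁] at this
      simpa [Stmt15Aux.pbCocone] using this
    have hτ₃fac : ∀ j, (colimit.ι G j).τ₃ ≫ φ.τ₃ = c.ι.app j ≫ e.hom := by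
      intro j
      have := congrArg ShortComplex.Hom.τ₃ (hι j)
      rw [ShortComplex.comp_τ₃] at this
      simpa [Stmt15Aux.pbCocone] using this
    have hconst : ∀ j j' : J, (colimit.ι G j).τ₁ = (colimit.ι G j').τ₁ := by
      have key : ∀ (a b : J) (hab : a ≤ b),
          (colimit.ι G a).τ₁ = (colimit.ι G b).τ₁ := by
        intro a b hab
        have := congrArg ShortComplex.Hom.τ₁ (colimit.w G (homOfLE hab))
        rw [ShortComplex.comp_τ₁] at this
        rw [← this]
        have hGmap : (G.map (homOfLE hab)).τ₁ = 𝟙 _ := rfl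
        rw [hGmap, Category.id_comp]
      intro j j'
      obtain ⟨k, hk, hk'⟩ := directed_of (· ≤ ·) j j'
      rw [key j k hk, key j' k hk']
    have j₀ : J := Classical.arbitrary J
    haveI hiso1 : IsIso φ.τ₁ := by
      refine ⟨(colimit.ι G j₀).τ₁, ?_, hτ₁fac j₀⟩
      apply (isColimitOfPreserves ShortComplex.π₁ (colimit.isColimit G)).hom_ext
      intro j
      dsimp
      change (colimit.ι G j).τ₁ ≫ _ = (colimit.ι G j).τ₁ ≫ _
      rw [← Category.assoc, hτ₁fac j]
      exact ((Category.id_comp _).trans (hconst j₀ j)).trans (Category.comp_id _).symm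
    -- cocone on F with point `(colimit G).X₃`
    let d : Cocone F :=
      { pt := (colimit G).X₃
        ι :=
          { app := fun j => (colimit.ι G j).τ₃
            naturality := fun j j' hjj' => by
              have := congrArg ShortComplex.Hom.τ₃ (colimit.w G hjj')
              rw [ShortComplex.comp_τ₃] at this
              have hGmap : (G.map hjj').τ₃ = F.map hjj' := rfl
              rw [hGmap] at this
              simpa using this } }
    haveI hiso3 : IsIso φ.τ₃ := by
      refine ⟨e.inv ≫ hc.desc d, ?_, ?_⟩
      · apply (isColimitOfPreserves ShortComplex.π₃ (colimit.isColimit G)).hom_ext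
        intro j
        dsimp
        change (colimit.ι G j).τ₃ ≫ _ = (colimit.ι G j).τ₃ ≫ _
        rw [← Category.assoc, hτ₃fac j, Category.assoc, Iso.hom_inv_id_assoc]
        exact (hc.fac d j).trans (Category.comp_id _).symm
      · have hde : hc.desc d ≫ φ.τ₃ = e.hom := by
          apply hc.hom_ext
          intro j
          rw [← Category.assoc, hc.fac d j]
          exact hτ₃fac j
        rw [Category.assoc, hde, Iso.inv_hom_id]
    have hGSE : (colimit G).ShortExact := by
      have := Stmt15Aux.colimitShortExact G
        (fun j => (Stmt15Aux.pbSplitting S c e hS s hs j).shortExact)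
        (colimit.cocone G) (colimit.isColimit G)
      exact this
    haveI : IsIso φ.τ₂ := ShortComplex.isIso₂_of_shortExact_of_isIso₁₃ φ hGSE hS
    haveI : IsIso φ := ShortComplex.isIso_of_isIso φ
    exact asIso φ
  · rintro ⟨J, pJ, hJ, F, c, ⟨hc⟩, hsplit, ⟨e⟩⟩ L hL
    obtain ⟨H⟩ := hL J pJ hJ
    set Φ := preadditiveCoyoneda.obj (op L) with hΦ
    haveI : IsDirected J (· ≤ ·) := Stmt15Aux.KDirected.isDirected hκ hJ
    haveI : Nonempty J := Stmt15Aux.KDirected.nonempty hκ hJ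
    let c' := Φ.mapShortComplex.mapCocone c
    have h₁ : IsColimit (ShortComplex.π₁.mapCocone c') :=
      isColimitOfPreserves Φ (isColimitOfPreserves ShortComplex.π₁ hc)
    have h₂ : IsColimit (ShortComplex.π₂.mapCocone c') :=
      isColimitOfPreserves Φ (isColimitOfPreserves ShortComplex.π₂ hc)
    have h₃ : IsColimit (ShortComplex.π₃.mapCocone c') :=
      isColimitOfPreserves Φ (isColimitOfPreserves ShortComplex.π₃ hc)
    have hc' : IsColimit c' := ShortComplex.isColimitOfIsColimitπ c' h₁ h₂ h₃
    have hSE : ∀ j, ((F ⋙ Φ.mapShortComplex).obj j).ShortExact := fun j =>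
      ((hsplit j).some.map Φ).shortExact
    have hpt : c'.pt.ShortExact :=
      Stmt15Aux.colimitShortExact (F ⋙ Φ.mapShortComplex) hSE c' hc'
    exact (ShortComplex.shortExact_iff_of_iso (Φ.mapShortComplex.mapIso e)).1 hpt
end
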